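/- For every positive integer n with n ≡ 3 or 7 (mod 16), 5·t(2,3,3;n) = 8·N(1,3,3;n+1). -/
import Mathlib

def tri (x : ℤ) : ℤ := x * (x + 1) / 2

noncomputable def N (a b c n : ℕ) : ℕ :=
  Nat.card {p : ℤ × ℤ × ℤ // (n : ℤ) = a * p.1 ^ 2 + b * p.2.1 ^ 2 + c * p.2.2 ^ 2}

noncomputable def t (a b c n : ℕ) : ℕ :=
  Nat.card {p : ℤ × ℤ × ℤ // (n : ℤ) = a * tri p.1 + b * tri p.2.1 + c * tri p.2.2}

noncomputable def T (a b c n : ℕ) : ℕ :=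
  Nat.card {p : ℕ × ℕ × ℕ // (n : ℤ) = a * tri p.1 + b * tri p.2.1 + c * tri p.2.2}

def Q3 (p : ℤ × ℤ × ℤ) : ℤ := p.1 ^ 2 + 3 * p.2.1 ^ 2 + 3 * p.2.2 ^ 2
def RSet (M : ℤ) : Set (ℤ × ℤ × ℤ) := {p | M = Q3 p}
def EVSet (M : ℤ) : Set (ℤ × ℤ × ℤ) :=
  {p | M = Q3 p ∧ Even p.1 ∧ Even p.2.1 ∧ Even p.2.2}
def M1Set (M : ℤ) : Set (ℤ × ℤ × ℤ) :=
  {p | M = Q3 p ∧ Odd p.1 ∧ Odd p.2.1 ∧ Even p.2.2}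
def M2Set (M : ℤ) : Set (ℤ × ℤ × ℤ) :=
  {p | M = Q3 p ∧ Odd p.1 ∧ Even p.2.1 ∧ Odd p.2.2}
def OSet (k : ℤ) : Set (ℤ × ℤ × ℤ) := {p | k = Q3 p ∧ Odd (p.1 + p.2.1)}
def MixSet (M : ℤ) : Set (ℤ × ℤ × ℤ) :=
  {p | M = Q3 p ∧ Odd p.1 ∧ Odd (p.2.1 + p.2.2)}
def TSet (n : ℤ) : Set (ℤ × ℤ × ℤ) :=
  {p | n = 2 * tri p.1 + 3 * tri p.2.1 + 3 * tri p.2.2}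

lemma two_tri (x : ℤ) : 2 * tri x = x * (x + 1) := by
  unfold tri
  rw [Int.mul_ediv_cancel' (Even.two_dvd (Int.even_mul_succ_self x))]

lemma int_le_sq (x : ℤ) : x ≤ x ^ 2 := by
  rcases le_or_gt x 0 with h | h
  · nlinarith [sq_nonneg x]
  · nlinarith [Int.add_one_le_iff.mpr h]

lemma finite_aux (M : ℤ) (S : Set (ℤ × ℤ × ℤ)) (hS : ∀ p ∈ S, M = Q3 p) : S.Finite := by
  apply Set.Finite.subset
    (Set.Finite.prod (Set.finite_Icc (-M) M)
      (Set.Finite.prod (Set.finite_Icc (-M) M) (Set.finite_Icc (-M) M)))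
  rintro ⟨x, y, z⟩ hp
  have h := hS _ hp
  simp only [Q3] at h
  have hx := int_le_sq x; have hx' := int_le_sq (-x)
  have hy := int_le_sq y; have hy' := int_le_sq (-y)
  have hz := int_le_sq z; have hz' := int_le_sq (-z)
  have sx := sq_nonneg x; have sy := sq_nonneg y; have sz := sq_nonneg z
  refine ⟨Set.mem_Icc.mpr ⟨by nlinarith, by nlinarith⟩,
    Set.mem_Icc.mpr ⟨by nlinarith, by nlinarith⟩,
    Set.mem_Icc.mpr ⟨by nlinarith, by nlinarith⟩⟩

lemma forcing {M : ℤ} (hM : 4 ∣ M) {p : ℤ × ℤ × ℤ} (hp : M = Q3 p) :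
    (Even p.1 ∧ Even p.2.1 ∧ Even p.2.2) ∨ (Odd p.1 ∧ Odd p.2.1 ∧ Even p.2.2) ∨
      (Odd p.1 ∧ Even p.2.1 ∧ Odd p.2.2) := by
  obtain ⟨x, y, z⟩ := p
  simp only [Q3] at hp
  obtain ⟨m, hm⟩ := hM
  rcases Int.even_or_odd x with ⟨a, ha⟩ | ⟨a, ha⟩ <;>
    rcases Int.even_or_odd y with ⟨b, hb⟩ | ⟨b, hb⟩ <;>
    rcases Int.even_or_odd z with ⟨c, hc⟩ | ⟨c, hc⟩
  · exact Or.inl ⟨⟨a, ha⟩, ⟨b, hb⟩, ⟨c, hc⟩⟩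
  · exfalso
    obtain ⟨K, hK⟩ : ∃ K : ℤ, 4 * m = 4 * K + 3 :=
      ⟨a * a + 3 * b * b + 3 * c ^ 2 + 3 * c, by rw [← hm, hp, ha, hb, hc]; ring⟩
    omega
  · exfalso
    obtain ⟨K, hK⟩ : ∃ K : ℤ, 4 * m = 4 * K + 3 :=
      ⟨a * a + 3 * b ^ 2 + 3 * b + 3 * c * c, by rw [← hm, hp, ha, hb, hc]; ring⟩
    omega
  · exfalso
    obtain ⟨K, hK⟩ : ∃ K : ℤ, 4 * m = 4 * K + 6 :=
      ⟨a * a + 3 * b ^ 2 + 3 * b + 3 * c ^ 2 + 3 * c, by rw [← hm, hp, ha, hb, hc]; ring⟩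
    omega
  · exfalso
    obtain ⟨K, hK⟩ : ∃ K : ℤ, 4 * m = 4 * K + 1 :=
      ⟨a ^ 2 + a + 3 * b * b + 3 * c * c, by rw [← hm, hp, ha, hb, hc]; ring⟩
    omega
  · exact Or.inr (Or.inr ⟨⟨a, ha⟩, ⟨b, hb⟩, ⟨c, hc⟩⟩)
  · exact Or.inr (Or.inl ⟨⟨a, ha⟩, ⟨b, hb⟩, ⟨c, hc⟩⟩)
  · exfalso
    obtain ⟨K, hK⟩ : ∃ K : ℤ, 4 * m = 4 * K + 7 :=
      ⟨a ^ 2 + a + 3 * b ^ 2 + 3 * b + 3 * c ^ 2 + 3 * c, by rw [← hm, hp, ha, hb, hc]; ring⟩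
    omega

lemma osum_odd {s : ℤ} (hs : s % 4 = 1 ∨ s % 4 = 2) {p : ℤ × ℤ × ℤ} (hp : s = Q3 p) :
    Odd (p.1 + p.2.1) := by
  obtain ⟨x, y, z⟩ := p
  simp only [Q3] at hp
  dsimp only
  rcases Int.even_or_odd x with ⟨a, ha⟩ | ⟨a, ha⟩ <;>
    rcases Int.even_or_odd y with ⟨b, hb⟩ | ⟨b, hb⟩ <;>
    rcases Int.even_or_odd z with ⟨c, hc⟩ | ⟨c, hc⟩
  · exfalso
    obtain ⟨K, hK⟩ : ∃ K : ℤ, s = 4 * K :=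
      ⟨a * a + 3 * b * b + 3 * c * c, by rw [hp, ha, hb, hc]; ring⟩
    omega
  · exfalso
    obtain ⟨K, hK⟩ : ∃ K : ℤ, s = 4 * K + 3 :=
      ⟨a * a + 3 * b * b + 3 * c ^ 2 + 3 * c, by rw [hp, ha, hb, hc]; ring⟩
    omega
  · exfalso
    obtain ⟨K, hK⟩ : ∃ K : ℤ, s = 4 * K + 3 :=
      ⟨a * a + 3 * b ^ 2 + 3 * b + 3 * c * c, by rw [hp, ha, hb, hc]; ring⟩
    omega
  · -- even, odd, odd : sum odd
    exact ⟨a + b, by omega⟩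
  · -- odd, even, even : sum odd
    exact ⟨a + b, by omega⟩
  · exfalso
    obtain ⟨K, hK⟩ : ∃ K : ℤ, s = 4 * K :=
      ⟨a ^ 2 + a + 3 * b * b + 3 * c ^ 2 + 3 * c + 1, by rw [hp, ha, hb, hc]; ring⟩
    omega
  · exfalso
    obtain ⟨K, hK⟩ : ∃ K : ℤ, s = 4 * K :=
      ⟨a ^ 2 + a + 3 * b ^ 2 + 3 * b + 3 * c * c + 1, by rw [hp, ha, hb, hc]; ring⟩
    omega
  · exfalso
    obtain ⟨K, hK⟩ : ∃ K : ℤ, s = 4 * K + 3 :=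
      ⟨a ^ 2 + a + 3 * b ^ 2 + 3 * b + 3 * c ^ 2 + 3 * c + 1, by rw [hp, ha, hb, hc]; ring⟩
    omega

lemma RSet_finite (M : ℤ) : (RSet M).Finite := finite_aux M _ (fun p hp => hp)
lemma EVSet_finite (M : ℤ) : (EVSet M).Finite := finite_aux M _ (fun p hp => hp.1)
lemma M1Set_finite (M : ℤ) : (M1Set M).Finite := finite_aux M _ (fun p hp => hp.1)
lemma M2Set_finite (M : ℤ) : (M2Set M).Finite := finite_aux M _ (fun p hp => hp.1)
lemma OSet_finite (M : ℤ) : (OSet M).Finite := finite_aux M _ (fun p hp => hp.1)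
lemma MixSet_finite (M : ℤ) : (MixSet M).Finite := finite_aux M _ (fun p hp => hp.1)

/-! ## Set identities -/

lemma OSet_eq_RSet {s : ℤ} (hs : s % 4 = 1 ∨ s % 4 = 2) : OSet s = RSet s := by
  ext p
  exact ⟨fun hp => hp.1, fun hp => ⟨hp, osum_odd hs hp⟩⟩

lemma OSet_eq_M2Set {s : ℤ} (hs : 4 ∣ s) : OSet s = M2Set s := by
  ext p
  constructor
  · rintro ⟨hQ, hsum⟩
    try dsimp only at *
    refine ⟨hQ, ?_⟩
    rcases forcing hs hQ with ⟨⟨a, ha⟩, ⟨b, hb⟩, -⟩ | ⟨⟨a, ha⟩, ⟨b, hb⟩, -⟩ | hgood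
    · obtain ⟨d, hd⟩ := hsum; omega
    · obtain ⟨d, hd⟩ := hsum; omega
    · exact hgood
  · rintro ⟨hQ, ⟨a, ha⟩, ⟨b, hb⟩, hz⟩
    try dsimp only at *
    exact ⟨hQ, ⟨a + b, by (try dsimp only); omega⟩⟩

lemma MixSet_eq_union (M : ℤ) : MixSet M = M1Set M ∪ M2Set M := by
  ext ⟨x, y, z⟩
  simp only [MixSet, M1Set, M2Set, Set.mem_setOf_eq, Set.mem_union]
  constructor
  · rintro ⟨hQ, hx, ⟨d, hd⟩⟩
    try dsimp only at *
    rcases Int.even_or_odd y with ⟨b, hb⟩ | ⟨b, hb⟩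
    · exact Or.inr ⟨hQ, hx, ⟨b, hb⟩, ⟨d - b, by (try dsimp only); omega⟩⟩
    · exact Or.inl ⟨hQ, hx, ⟨b, hb⟩, ⟨d - b, by (try dsimp only); omega⟩⟩
  · rintro (⟨hQ, hx, ⟨b, hb⟩, ⟨c, hc⟩⟩ | ⟨hQ, hx, ⟨b, hb⟩, ⟨c, hc⟩⟩)
    try dsimp only at *
    · exact ⟨hQ, hx, ⟨b + c, by (try dsimp only); omega⟩⟩
    · exact ⟨hQ, hx, ⟨b + c, by (try dsimp only); omega⟩⟩

lemma RSet_eq_union {M : ℤ} (hM : 4 ∣ M) : RSet M = EVSet M ∪ (M1Set M ∪ M2Set M) := by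
  ext p
  constructor
  · intro hQ
    rcases forcing hM hQ with h | h | h
    · exact Or.inl ⟨hQ, h⟩
    · exact Or.inr (Or.inl ⟨hQ, h⟩)
    · exact Or.inr (Or.inr ⟨hQ, h⟩)
  · rintro (h | h | h) <;> exact h.1
    try dsimp only at *

/-! ## Cardinality identities -/

lemma card_M2_eq_M1 (M : ℤ) : (M2Set M).ncard = (M1Set M).ncard := by
  have himg : M2Set M = (fun p : ℤ × ℤ × ℤ => (p.1, p.2.2, p.2.1)) '' M1Set M := by
    ext ⟨x, y, z⟩
    constructor
    · rintro ⟨hQ, hx, hy, hz⟩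
      try dsimp only at *
      refine ⟨(x, z, y), ⟨?_, hx, hz, hy⟩, rfl⟩
      simp only [Q3] at hQ ⊢
      linarith
    · rintro ⟨⟨a, b, c⟩, ⟨hQ, hx, hy, hz⟩, heq⟩
      try dsimp only at *
      obtain ⟨h1, h2, h3⟩ : a = x ∧ c = y ∧ b = z := by
        simpa [Prod.ext_iff] using heq
      subst h1; subst h2; subst h3
      refine ⟨?_, hx, hz, hy⟩
      simp only [Q3] at hQ ⊢
      linarith
  rw [himg, Set.ncard_image_of_injective _ (by
    rintro ⟨a, b, c⟩ ⟨a', b', c'⟩ h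
    try dsimp only at *
    simpa [Prod.ext_iff, and_comm] using h)]

lemma card_EV (k : ℤ) : (EVSet (4 * k)).ncard = (RSet k).ncard := by
  have himg : EVSet (4 * k)
      = (fun p : ℤ × ℤ × ℤ => (2 * p.1, 2 * p.2.1, 2 * p.2.2)) '' RSet k := by
    ext ⟨x, y, z⟩
    constructor
    · rintro ⟨hQ, ⟨a, ha⟩, ⟨b, hb⟩, ⟨c, hc⟩⟩
      try dsimp only at *
      refine ⟨(a, b, c), ?_, by simp [Prod.ext_iff]; omega⟩
      simp only [RSet, Q3, Set.mem_setOf_eq] at hQ ⊢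
      have h4 : 4 * k = 4 * (a ^ 2 + 3 * b ^ 2 + 3 * c ^ 2) := by
        rw [hQ, ha, hb, hc]; ring
      linarith
    · rintro ⟨⟨a, b, c⟩, hQ, heq⟩
      try dsimp only at *
      obtain ⟨h1, h2, h3⟩ : 2 * a = x ∧ 2 * b = y ∧ 2 * c = z := by
        simpa [Prod.ext_iff] using heq
      simp only [RSet, Q3, Set.mem_setOf_eq] at hQ
      refine ⟨?_, ⟨a, by (try dsimp only); omega⟩, ⟨b, by (try dsimp only); omega⟩, ⟨c, by (try dsimp only); omega⟩⟩
      simp only [Q3]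
      rw [← h1, ← h2, ← h3, hQ]; ring
  rw [himg, Set.ncard_image_of_injective _ (by
    rintro ⟨a, b, c⟩ ⟨a', b', c'⟩ h
    try dsimp only at *
    simp only [Prod.ext_iff] at h ⊢
    omega)]

lemma card_M1 (k : ℤ) : (M1Set (4 * k)).ncard = 2 * (OSet k).ncard := by
  set f1 : ℤ × ℤ × ℤ → ℤ × ℤ × ℤ :=
    fun w => (w.1 + 3 * w.2.1, w.1 - w.2.1, 2 * w.2.2) with hf1
  set f2 : ℤ × ℤ × ℤ → ℤ × ℤ × ℤ :=
    fun w => (w.1 + 3 * w.2.1, w.2.1 - w.1, 2 * w.2.2) with hf2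
  have himg : M1Set (4 * k) = f1 '' OSet k ∪ f2 '' OSet k := by
    ext ⟨x, y, z⟩
    constructor
    · rintro ⟨hQ, ⟨a0, hx0⟩, ⟨b0, hy0⟩, ⟨c, hz0⟩⟩
      try dsimp only at *
      simp only [Q3] at hQ
      have hd : (x + 3 * y) % 4 = 0 ∨ (x + 3 * y) % 4 = 2 := by (try dsimp only); omega
      rcases hd with hd | hd
      · left
        obtain ⟨a, ha⟩ : (4 : ℤ) ∣ x + 3 * y := by (try dsimp only); omega
        refine ⟨(a, a - y, c), ⟨?_, ⟨a - b0 - 1, by (try dsimp only); omega⟩⟩, ?_⟩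
        · simp only [Q3]
          have h4 : 4 * k = 4 * (a ^ 2 + 3 * (a - y) ^ 2 + 3 * c ^ 2) := by
            rw [hQ]
            have hx4 : x = 4 * a - 3 * y := by (try dsimp only); omega
            rw [hx4, hz0]; ring
          linarith
        · simp only [hf1, Prod.ext_iff]
          refine ⟨by (try dsimp only); omega, by (try dsimp only); omega, by (try dsimp only); omega⟩
      · right
        obtain ⟨a, ha⟩ : (4 : ℤ) ∣ x - 3 * y := by (try dsimp only); omega
        refine ⟨(a, a + y, c), ⟨?_, ⟨a + b0, by (try dsimp only); omega⟩⟩, ?_⟩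
        · simp only [Q3]
          have h4 : 4 * k = 4 * (a ^ 2 + 3 * (a + y) ^ 2 + 3 * c ^ 2) := by
            rw [hQ]
            have hx4 : x = 4 * a + 3 * y := by (try dsimp only); omega
            rw [hx4, hz0]; ring
          linarith
        · simp only [hf2, Prod.ext_iff]
          refine ⟨by (try dsimp only); omega, by (try dsimp only); omega, by (try dsimp only); omega⟩
    · rintro (⟨⟨a, b, c⟩, ⟨hQ, ⟨d, hd⟩⟩, heq⟩ | ⟨⟨a, b, c⟩, ⟨hQ, ⟨d, hd⟩⟩, heq⟩)
      · try dsimp only at *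
        obtain ⟨h1, h2, h3⟩ : a + 3 * b = x ∧ a - b = y ∧ 2 * c = z := by
          simpa [hf1, Prod.ext_iff] using heq
        simp only [Q3] at hQ
        refine ⟨?_, ⟨b + d, by (try dsimp only); omega⟩, ⟨d - b, by (try dsimp only); omega⟩, ⟨c, by (try dsimp only); omega⟩⟩
        simp only [Q3]
        rw [← h1, ← h2, ← h3, hQ]; ring
      · try dsimp only at *
        obtain ⟨h1, h2, h3⟩ : a + 3 * b = x ∧ b - a = y ∧ 2 * c = z := by
          simpa [hf2, Prod.ext_iff] using heq
        simp only [Q3] at hQ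
        refine ⟨?_, ⟨b + d, by (try dsimp only); omega⟩, ⟨b - d - 1, by (try dsimp only); omega⟩, ⟨c, by (try dsimp only); omega⟩⟩
        simp only [Q3]
        rw [← h1, ← h2, ← h3, hQ]; ring
  have hdj : Disjoint (f1 '' OSet k) (f2 '' OSet k) := by
    rw [Set.disjoint_left]
    rintro p ⟨⟨a, b, c⟩, ⟨-, ⟨d, hd⟩⟩, rfl⟩ ⟨⟨a', b', c'⟩, ⟨-, ⟨d', hd'⟩⟩, heq⟩
    try dsimp only at *
    obtain ⟨h1, h2, h3⟩ : a' + 3 * b' = a + 3 * b ∧ b' - a' = a - b ∧ 2 * c' = 2 * c := by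
      simpa [hf1, hf2, Prod.ext_iff] using heq
    omega
  have hinj1 : Function.Injective f1 := by
    rintro ⟨a, b, c⟩ ⟨a', b', c'⟩ h
    try dsimp only at *
    simp only [hf1, Prod.ext_iff] at h ⊢
    omega
  have hinj2 : Function.Injective f2 := by
    rintro ⟨a, b, c⟩ ⟨a', b', c'⟩ h
    try dsimp only at *
    simp only [hf2, Prod.ext_iff] at h ⊢
    omega
  rw [himg, Set.ncard_union_eq hdj ((OSet_finite k).image f1) ((OSet_finite k).image f2),
    Set.ncard_image_of_injective _ hinj1, Set.ncard_image_of_injective _ hinj2]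
  ring

lemma card_RSet_4k {k : ℤ} : (RSet (4 * k)).ncard
    = (RSet k).ncard + ((M1Set (4 * k)).ncard + (M2Set (4 * k)).ncard) := by
  have hdj1 : Disjoint (EVSet (4 * k)) (M1Set (4 * k) ∪ M2Set (4 * k)) := by
    rw [Set.disjoint_left]
    rintro p ⟨-, ⟨a, ha⟩, -, -⟩ (⟨-, ⟨b, hb⟩, -, -⟩ | ⟨-, ⟨b, hb⟩, -, -⟩) <;> omega
    try dsimp only at *
  have hdj2 : Disjoint (M1Set (4 * k)) (M2Set (4 * k)) := by
    rw [Set.disjoint_left]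
    rintro p ⟨-, -, ⟨a, ha⟩, -⟩ ⟨-, -, ⟨b, hb⟩, -⟩
    try dsimp only at *
    omega
  rw [RSet_eq_union ⟨k, rfl⟩,
    Set.ncard_union_eq hdj1 (EVSet_finite _) ((M1Set_finite _).union (M2Set_finite _)),
    Set.ncard_union_eq hdj2 (M1Set_finite _) (M2Set_finite _), card_EV]

lemma card_TSet (n : ℤ) : (TSet n).ncard = (MixSet (4 * (n + 1))).ncard := by
  set f : ℤ × ℤ × ℤ → ℤ × ℤ × ℤ :=
    fun p => (2 * p.1 + 1, p.2.1 + p.2.2 + 1, p.2.1 - p.2.2) with hf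
  have himg : MixSet (4 * (n + 1)) = f '' TSet n := by
    ext ⟨u, p, q⟩
    constructor
    · rintro ⟨hQ, ⟨x0, hu⟩, ⟨w, hpq⟩⟩
      try dsimp only at *
      obtain ⟨v, hv⟩ : ∃ v : ℤ, p - q = 2 * v + 1 := ⟨(p - q - 1) / 2, by (try dsimp only); omega⟩
      refine ⟨(x0, w, v), ?_, ?_⟩
      · show n = 2 * tri x0 + 3 * tri w + 3 * tri v
        simp only [Q3] at hQ
        have h4 : 4 * n = 4 * (2 * tri x0) + 6 * (2 * tri w) + 6 * (2 * tri v) := by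
          rw [two_tri, two_tri, two_tri]
          have hu' : u = 2 * x0 + 1 := hu
          have hp' : p = w + v + 1 := by (try dsimp only); omega
          have hq' : q = w - v := by (try dsimp only); omega
          rw [hu', hp', hq'] at hQ
          linarith [hQ]
        linarith [h4]
      · simp only [hf, Prod.ext_iff]
        refine ⟨by (try dsimp only); omega, by (try dsimp only); omega, by (try dsimp only); omega⟩
    · rintro ⟨⟨x, y, z⟩, hT, heq⟩
      try dsimp only at *
      obtain ⟨h1, h2, h3⟩ : 2 * x + 1 = u ∧ y + z + 1 = p ∧ y - z = q := by
        simpa [hf, Prod.ext_iff] using heq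
      have hT' : n = 2 * tri x + 3 * tri y + 3 * tri z := hT
      refine ⟨?_, ⟨x, by (try dsimp only); omega⟩, ⟨y, by (try dsimp only); omega⟩⟩
      simp only [Q3]
      have t1 := two_tri x; have t2 := two_tri y; have t3 := two_tri z
      rw [← h1, ← h2, ← h3]
      linear_combination 4 * hT' + 4 * t1 + 6 * t2 + 6 * t3
  have hinj : Function.Injective f := by
    rintro ⟨a, b, c⟩ ⟨a', b', c'⟩ h
    try dsimp only at *
    simp only [hf, Prod.ext_iff] at h ⊢
    omega
  rw [himg, Set.ncard_image_of_injective _ hinj]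

theorem stmt6 (n : ℕ) (hn : 0 < n) (h : n % 16 = 3 ∨ n % 16 = 7) :
    5 * t 2 3 3 n = 8 * N 1 3 3 (n + 1) := by
  obtain ⟨s, hs1, hs2⟩ : ∃ s : ℤ, (n : ℤ) + 1 = 4 * s ∧ (s % 4 = 1 ∨ s % 4 = 2) := by
    refine ⟨((n : ℤ) + 1) / 4, by omega, by omega⟩
  -- identify t with TSet count
  have ht : t 2 3 3 n = (TSet (n : ℤ)).ncard := by
    rw [← Nat.card_coe_set_eq]
    apply Nat.card_congr
    apply Equiv.subtypeEquivRight
    intro p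
    simp [TSet, Set.mem_setOf_eq]
  have hN : N 1 3 3 (n + 1) = (RSet ((n : ℤ) + 1)).ncard := by
    rw [← Nat.card_coe_set_eq]
    apply Nat.card_congr
    apply Equiv.subtypeEquivRight
    intro p
    simp [RSet, Q3, Set.mem_setOf_eq]
  -- core counts
  have hr : (RSet ((n : ℤ) + 1)).ncard = 5 * (RSet s).ncard := by
    rw [hs1, card_RSet_4k, card_M2_eq_M1, card_M1, OSet_eq_RSet hs2]
    ring
  have hm : (MixSet (4 * ((n : ℤ) + 1))).ncard = 8 * (RSet s).ncard := by
    have h16 : 4 * ((n : ℤ) + 1) = 4 * (4 * s) := by rw [hs1]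
    rw [h16, MixSet_eq_union, Set.ncard_union_eq ?dj ?f1 ?f2, card_M2_eq_M1,
      card_M1, OSet_eq_M2Set ⟨s, rfl⟩, card_M2_eq_M1, card_M1, OSet_eq_RSet hs2]
    · ring
    case dj =>
      rw [Set.disjoint_left]
      rintro p ⟨-, -, hy, -⟩ ⟨-, -, hy', -⟩
      exact (Int.not_odd_iff_even.mpr hy') hy
    case f1 => exact M1Set_finite _
    case f2 => exact M2Set_finite _
  rw [ht, hN, card_TSet, hr, hm]
  ring
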